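/- Let m: P¹ → P¹ be the toric Frobenius morphism of degree m (z ↦ z^m) and 0 ≤ a < m an integer. Then m_*O_{P¹}(a) ≅ O_{P¹}^{⊕(a+1)} ⊕ O_{P¹}(−1)^{⊕(m−a−1)}. -/

import Mathlib

/-- The space of degree-`n` forms on `P¹` (sections of `O(n)`), for `n : ℤ`
(zero in negative degrees): the homogeneous part of degree `n` of `ℚ[s,t]`. -/
noncomputable def P1deg (n : ℤ) : Submodule ℚ (MvPolynomial (Fin 2) ℚ) :=
  if 0 ≤ n then MvPolynomial.homogeneousSubmodule (Fin 2) ℚ n.toNat else ⊥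

/-- The homogeneous coordinate ring map of the toric Frobenius morphism
`P¹ → P¹`, `[s : t] ↦ [sᵐ : tᵐ]` (i.e. `z ↦ zᵐ` on the torus). -/
noncomputable def frobP1 (m : ℕ) :
    MvPolynomial (Fin 2) ℚ →ₐ[ℚ] MvPolynomial (Fin 2) ℚ :=
  MvPolynomial.aeval (fun i : Fin 2 => MvPolynomial.X i ^ m)

/-!
A monomial `sⁿ⁰ tⁿ¹` of degree `m d + a` with `n₀ ≡ r (mod m)`, `0 ≤ r < m`, has
`n₁ ≡ a - r (mod m)`, so it factors uniquely as `g_r · frob (sᵏ⁰ tᵏ¹)` with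
`g_r = sʳ t^((a - r) mod m)`. Since `g_r` has degree `a` for `r ≤ a` and `m + a` for `r > a`,
the monomial `sᵏ⁰ tᵏ¹` has degree `d`, resp. `d - 1`. So the forms of degree `m d + a` are the
direct sum over `r < m` of `g_r · frob (forms of degree d, resp. d - 1)`, and the projection to
the `r`-th summand (keep the monomials with `n₀ ≡ r`, divide all exponents by `m`) is linear
over `frob`.
-/

open MvPolynomial

namespace ToricFrobeniusP1

lemma mod_eq_of_add_mod_eq {x y m a : ℕ} (ha : a < m) (h : (x + y) % m = a) :
    y % m = if x % m ≤ a then a - x % m else m + a - x % m := by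
  have hx := Nat.mod_lt x (a.zero_le.trans_lt ha)
  have hy := Nat.mod_lt y (a.zero_le.trans_lt ha)
  rw [Nat.add_mod] at h
  rcases lt_or_ge (x % m + y % m) m with hs | hs
  · rw [Nat.mod_eq_of_lt hs] at h
    split_ifs <;> omega
  · rw [Nat.mod_eq_sub_mod hs, Nat.mod_eq_of_lt (by omega)] at h
    split_ifs <;> omega

lemma mod_eq_of_cast_eq_mul_add {N m a : ℕ} {d : ℤ} (ha : a < m) (h : (N : ℤ) = m * d + a) :
    N % m = a := by
  have : ((N % m : ℕ) : ℤ) = a := by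
    rw [Int.natCast_mod, h, Int.mul_add_emod_self_left, Int.emod_eq_of_lt (by omega) (by omega)]
  exact_mod_cast this

lemma sum_range_eq_sum_fin_add {M : Type*} [AddCommMonoid M] {a m : ℕ} (ha : a < m)
    (f : ℕ → M) :
    ∑ r ∈ Finset.range m, f r = ∑ i : Fin (a + 1), f i + ∑ j : Fin (m - a - 1), f (a + 1 + j) := by
  rw [Fin.sum_univ_eq_sum_range, Fin.sum_univ_eq_sum_range (fun j => f (a + 1 + j)),
    ← Finset.sum_range_add]
  congr 2
  omega

variable {σ R : Type*} [CommSemiring R] (m a : ℕ)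

noncomputable def expDiv (n : σ →₀ ℕ) : σ →₀ ℕ := Finsupp.mapRange (· / m) (Nat.zero_div m) n

@[simp] lemma expDiv_apply (n : σ →₀ ℕ) (i : σ) : expDiv m n i = n i / m := rfl

lemma expDiv_smul_add {m : ℕ} (hm : 0 < m) (u n : σ →₀ ℕ) :
    expDiv m (m • u + n) = u + expDiv m n := by
  ext i
  simp [Nat.mul_add_div hm]

noncomputable def component (r : ℕ) : MvPolynomial (Fin 2) R →ₗ[R] MvPolynomial (Fin 2) R :=
  (basisMonomials (Fin 2) R).constr R
    fun n => if n 0 % m = r then monomial (expDiv m n) 1 else 0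

lemma component_monomial (r : ℕ) (n : Fin 2 →₀ ℕ) (c : R) :
    component m r (monomial n c) = if n 0 % m = r then monomial (expDiv m n) c else 0 := by
  have hc : monomial n c = c • monomial n (1 : R) := by rw [smul_monomial, smul_eq_mul, mul_one]
  have hb : monomial n (1 : R) = basisMonomials (Fin 2) R n := by rw [coe_basisMonomials]
  rw [hc, map_smul, hb, component, Module.Basis.constr_basis]
  split_ifs <;> simp [smul_monomial]

lemma component_expand_mul {m : ℕ} (hm : 0 < m) (r : ℕ) (f p : MvPolynomial (Fin 2) R) :
    component m r (expand m f * p) = f * component m r p := by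
  induction f using MvPolynomial.induction_on' with
  | add f g hf hg => rw [map_add, add_mul, map_add, add_mul, hf, hg]
  | monomial u b =>
    induction p using MvPolynomial.induction_on' with
    | add p q hp hq => rw [mul_add, map_add, map_add, mul_add, hp, hq]
    | monomial n c =>
      have h0 : (m • u + n) 0 % m = n 0 % m := by simp
      rw [expand_monomial, monomial_mul, component_monomial, component_monomial, h0,
        expDiv_smul_add hm]
      split_ifs <;> simp [monomial_mul]

/-- The exponent of `g_r`. -/
noncomputable def genExp (r : ℕ) : Fin 2 →₀ ℕ :=
  Finsupp.single 0 r + Finsupp.single 1 (if r ≤ a then a - r else m + a - r)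

@[simp] lemma genExp_zero (r : ℕ) : genExp m a r 0 = r := by simp [genExp]

@[simp] lemma genExp_one (r : ℕ) :
    genExp m a r 1 = if r ≤ a then a - r else m + a - r := by simp [genExp]

lemma degree_genExp_of_le {r : ℕ} (hr : r ≤ a) : (genExp m a r).degree = a := by
  rw [genExp, map_add, Finsupp.degree_single, Finsupp.degree_single, if_pos hr]
  omega

lemma degree_genExp_of_lt {r : ℕ} (hr : a < r) (hrm : r < m) :
    (genExp m a r).degree = m + a := by
  rw [genExp, map_add, Finsupp.degree_single, Finsupp.degree_single, if_neg hr.not_ge]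
  omega

noncomputable def embed (r : ℕ) : MvPolynomial (Fin 2) R →ₗ[R] MvPolynomial (Fin 2) R :=
  LinearMap.mulLeft R (monomial (genExp m a r) 1) ∘ₗ (expand m).toLinearMap

lemma embed_monomial (r : ℕ) (n : Fin 2 →₀ ℕ) (c : R) :
    embed m a r (monomial n c) = monomial (genExp m a r + m • n) c := by
  simp [embed, monomial_mul]

variable {m a}

lemma genExp_add_smul_expDiv (ha : a < m) {n : Fin 2 →₀ ℕ} (hn : n.degree % m = a) :
    genExp m a (n 0 % m) + m • expDiv m n = n := by
  rw [Finsupp.degree_eq_sum, Fin.sum_univ_two] at hn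
  ext i
  fin_cases i
  · simp [Nat.mod_add_div]
  · simp [← mod_eq_of_add_mod_eq ha hn, Nat.mod_add_div]

lemma component_genExp_add_smul (ha : a < m) {r : ℕ} (hr : r < m) (r' : ℕ)
    (k : Fin 2 →₀ ℕ) (c : R) :
    component m r' (monomial (genExp m a r + m • k) c) = if r' = r then monomial k c else 0 := by
  have hm : 0 < m := a.zero_le.trans_lt ha
  have hlt : (if r ≤ a then a - r else m + a - r) < m := by split_ifs <;> omega
  have h0 : (genExp m a r + m • k) 0 % m = r := by
    simp [Nat.add_mul_mod_self_left, Nat.mod_eq_of_lt hr]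
  have hdiv : expDiv m (genExp m a r + m • k) = k := by
    rw [add_comm, expDiv_smul_add hm]
    ext i
    fin_cases i <;> simp [Nat.div_eq_of_lt, hr, hlt]
  rw [component_monomial, h0, hdiv]
  simp only [eq_comm]

lemma component_embed (ha : a < m) {r : ℕ} (hr : r < m) (r' : ℕ) (w : MvPolynomial (Fin 2) R) :
    component m r' (embed m a r w) = if r' = r then w else 0 := by
  induction w using MvPolynomial.induction_on' with
  | monomial k c => rw [embed_monomial, component_genExp_add_smul ha hr]
  | add p q hp hq => rw [map_add, map_add, hp, hq]; split_ifs <;> simp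

lemma P1deg_eq_span (n : ℤ) :
    P1deg n = Submodule.span ℚ ((monomial · 1) '' {k : Fin 2 →₀ ℕ | (k.degree : ℤ) = n}) := by
  unfold P1deg
  split_ifs with hn
  · rw [homogeneousSubmodule_eq_finsupp_supported, AddMonoidAlgebra.supported_eq_span_single]
    congr! 3 with k
    ext k
    show _ = _ ↔ _ = _
    omega
  · rw [eq_comm, Submodule.span_eq_bot]
    rintro _ ⟨k, hk, rfl⟩
    exact absurd hk.symm (by omega)

lemma monomial_mem_P1deg {k : Fin 2 →₀ ℕ} {n : ℤ} (hk : (k.degree : ℤ) = n) (c : ℚ) :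
    monomial k c ∈ P1deg n := by
  rw [← mul_one c, ← smul_eq_mul, ← smul_monomial, P1deg_eq_span]
  exact Submodule.smul_mem _ _ (Submodule.subset_span ⟨k, hk, rfl⟩)

lemma mapsTo_P1deg {L : MvPolynomial (Fin 2) ℚ →ₗ[ℚ] MvPolynomial (Fin 2) ℚ} {n n' : ℤ}
    (hL : ∀ k : Fin 2 →₀ ℕ, (k.degree : ℤ) = n → L (monomial k 1) ∈ P1deg n') :
    Set.MapsTo L (P1deg n) (P1deg n') := by
  intro v hv
  rw [P1deg_eq_span] at hv
  refine (Submodule.span_le (p := (P1deg n').comap L)).2 ?_ hv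
  rintro _ ⟨k, hk, rfl⟩
  exact hL k hk

lemma embed_mapsTo {r : ℕ} {d n : ℤ} (h : m * d + (genExp m a r).degree = n) :
    Set.MapsTo (embed (R := ℚ) m a r) (P1deg d) (P1deg n) :=
  mapsTo_P1deg fun k hk => by
    rw [embed_monomial]
    exact monomial_mem_P1deg (by push_cast [map_add, map_nsmul, smul_eq_mul, hk]; omega) 1

lemma component_mapsTo (ha : a < m) {r : ℕ} {d d' : ℤ}
    (h : m * d' + (genExp m a r).degree = m * d + a) :
    Set.MapsTo (component (R := ℚ) m r) (P1deg (m * d + a)) (P1deg d') :=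
  mapsTo_P1deg fun k hk => by
    rw [component_monomial]
    split_ifs with hr
    · have hdeg : (genExp m a r).degree + m * (expDiv m k).degree = k.degree := by
        rw [← smul_eq_mul, ← map_nsmul, ← map_add, ← hr,
          genExp_add_smul_expDiv ha (mod_eq_of_cast_eq_mul_add ha hk)]
      refine monomial_mem_P1deg (mul_left_cancel₀ (a := (m : ℤ)) (by omega) ?_) 1
      rw [← hdeg] at hk
      push_cast at hk
      linarith
    · exact zero_mem _

lemma sum_embed_component (ha : a < m) {d : ℤ} {v : MvPolynomial (Fin 2) ℚ}
    (hv : v ∈ P1deg (m * d + a)) :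
    ∑ r ∈ Finset.range m, embed m a r (component m r v) = v := by
  rw [P1deg_eq_span] at hv
  suffices Set.EqOn (∑ r ∈ Finset.range m, embed m a r ∘ₗ component m r : _ →ₗ[ℚ] _) LinearMap.id
      ((monomial · 1) '' {k : Fin 2 →₀ ℕ | (k.degree : ℤ) = m * d + a}) by
    simpa using LinearMap.eqOn_span this hv
  rintro _ ⟨k, hk, rfl⟩
  have hmod := mod_eq_of_cast_eq_mul_add ha hk
  simp only [LinearMap.sum_apply, LinearMap.comp_apply, component_monomial,
    apply_ite, map_zero, Finset.sum_ite_eq, Finset.mem_range,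
    Nat.mod_lt _ (a.zero_le.trans_lt ha), if_true, embed_monomial, genExp_add_smul_expDiv ha hmod,
    LinearMap.id_apply]

lemma mul_add_degree_genExp_of_fin (d : ℤ) (i : Fin (a + 1)) :
    (m : ℤ) * d + (genExp m a i).degree = m * d + a := by
  rw [degree_genExp_of_le m a (Fin.is_le i)]

lemma mul_sub_one_add_degree_genExp_of_fin (d : ℤ) (j : Fin (m - a - 1)) :
    (m : ℤ) * (d - 1) + (genExp m a (a + 1 + j)).degree = m * d + a := by
  rw [degree_genExp_of_lt m a (by omega) (by omega)]
  push_cast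
  ring

section Splitting

variable (ha : a < m) (d : ℤ)

noncomputable def toSplit :
    P1deg (m * d + a) →ₗ[ℚ] (Fin (a + 1) → P1deg d) × (Fin (m - a - 1) → P1deg (d - 1)) :=
  LinearMap.prod
    (LinearMap.pi fun i =>
      (component m i).restrict (component_mapsTo ha (mul_add_degree_genExp_of_fin d i)))
    (LinearMap.pi fun j =>
      (component m (a + 1 + j)).restrict
        (component_mapsTo ha (mul_sub_one_add_degree_genExp_of_fin d j)))

lemma coe_toSplit_fst (v : P1deg (m * d + a)) (i : Fin (a + 1)) :
    ((toSplit ha d v).1 i : MvPolynomial (Fin 2) ℚ) = component m i v := rfl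

lemma coe_toSplit_snd (v : P1deg (m * d + a)) (j : Fin (m - a - 1)) :
    ((toSplit ha d v).2 j : MvPolynomial (Fin 2) ℚ) = component m (a + 1 + j) v := rfl

noncomputable def ofSplit :
    ((Fin (a + 1) → P1deg d) × (Fin (m - a - 1) → P1deg (d - 1))) →ₗ[ℚ] P1deg (m * d + a) :=
  (∑ i : Fin (a + 1), (embed m a i).restrict (embed_mapsTo (mul_add_degree_genExp_of_fin d i))
      ∘ₗ LinearMap.proj i ∘ₗ LinearMap.fst ℚ _ _) +
  ∑ j : Fin (m - a - 1),
    (embed m a (a + 1 + j)).restrict (embed_mapsTo (mul_sub_one_add_degree_genExp_of_fin d j))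
      ∘ₗ LinearMap.proj j ∘ₗ LinearMap.snd ℚ _ _

lemma coe_ofSplit (x : (Fin (a + 1) → P1deg d) × (Fin (m - a - 1) → P1deg (d - 1))) :
    (ofSplit d x : MvPolynomial (Fin 2) ℚ) =
      ∑ i : Fin (a + 1), embed m a i (x.1 i) +
        ∑ j : Fin (m - a - 1), embed m a (a + 1 + j) (x.2 j) := by
  simp only [ofSplit, LinearMap.add_apply, LinearMap.coe_sum, LinearMap.coe_comp,
    LinearMap.coe_proj, LinearMap.coe_fst, Finset.sum_apply, Function.comp_apply, Function.eval,
    LinearMap.coe_snd, Submodule.coe_add, AddSubmonoidClass.coe_finsetSum]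
  rfl

lemma toSplit_ofSplit (x : (Fin (a + 1) → P1deg d) × (Fin (m - a - 1) → P1deg (d - 1))) :
    toSplit ha d (ofSplit d x) = x := by
  have hi : ∀ i : Fin (a + 1), (i : ℕ) < m := fun i => by omega
  have hj : ∀ j : Fin (m - a - 1), a + 1 + j < m := fun j => by omega
  have hij : ∀ (i : Fin (a + 1)) (j : Fin (m - a - 1)), (i : ℕ) ≠ a + 1 + j := fun i j => by omega
  refine Prod.ext (funext fun i => Subtype.ext ?_) (funext fun j => Subtype.ext ?_)
  all_goals
    change component m _ (ofSplit d x : MvPolynomial (Fin 2) ℚ) = _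
    simp only [coe_ofSplit, map_add, map_sum, component_embed ha (hi _), component_embed ha (hj _)]
  · simp [Fin.val_inj, hij]
  · simp [Fin.val_inj, Ne.symm (hij _ _)]

lemma ofSplit_toSplit (v : P1deg (m * d + a)) : ofSplit d (toSplit ha d v) = v := by
  apply Subtype.ext
  rw [coe_ofSplit]
  simp only [coe_toSplit_fst, coe_toSplit_snd]
  rw [← sum_range_eq_sum_fin_add ha
    fun r => embed m a r (component m r (v : MvPolynomial (Fin 2) ℚ))]
  exact sum_embed_component ha v.2

noncomputable def splitEquiv :
    P1deg (m * d + a) ≃ₗ[ℚ] (Fin (a + 1) → P1deg d) × (Fin (m - a - 1) → P1deg (d - 1)) :=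
  .ofLinearMap (toSplit ha d) (ofSplit d) (LinearMap.ext (toSplit_ofSplit ha d))
    (LinearMap.ext (ofSplit_toSplit ha d))

end Splitting

end ToricFrobeniusP1

theorem stmt_15_general (m : ℕ) (a : ℕ) (ha : a < m) :
    ∃ e : (d : ℤ) → P1deg ((m : ℤ) * d + (a : ℤ)) ≃ₗ[ℚ]
        (Fin (a + 1) → P1deg d) × (Fin (m - a - 1) → P1deg (d - 1)),
      ∀ (d : ℤ) (c : ℕ) (f : MvPolynomial (Fin 2) ℚ),
        f ∈ MvPolynomial.homogeneousSubmodule (Fin 2) ℚ c →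
        ∀ (v : P1deg ((m : ℤ) * d + (a : ℤ)))
          (hfv : frobP1 m f * (v : MvPolynomial (Fin 2) ℚ) ∈
            P1deg ((m : ℤ) * (d + (c : ℤ)) + (a : ℤ)))
          (h1 : ∀ i : Fin (a + 1),
            f * ((e d v).1 i : MvPolynomial (Fin 2) ℚ) ∈ P1deg (d + (c : ℤ)))
          (h2 : ∀ j : Fin (m - a - 1),
            f * ((e d v).2 j : MvPolynomial (Fin 2) ℚ) ∈ P1deg (d + (c : ℤ) - 1)),
          e (d + (c : ℤ)) ⟨frobP1 m f * (v : MvPolynomial (Fin 2) ℚ), hfv⟩ =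
            (fun i => ⟨f * ((e d v).1 i : MvPolynomial (Fin 2) ℚ), h1 i⟩,
             fun j => ⟨f * ((e d v).2 j : MvPolynomial (Fin 2) ℚ), h2 j⟩) := by
  refine ⟨ToricFrobeniusP1.splitEquiv ha, fun _ _ f _ v _ _ _ => ?_⟩
  have hm : 0 < m := a.zero_le.trans_lt ha
  refine Prod.ext (funext fun _ => Subtype.ext ?_) (funext fun _ => Subtype.ext ?_) <;>
    exact ToricFrobeniusP1.component_expand_mul hm _ f v

/-- Thomsen's toric Frobenius splitting on `P¹`: for the degree-`m` toric Frobenius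
morphism `m : P¹ → P¹` and `0 ≤ a < m`, one has
`m_* O(a) ≅ O^{⊕(a+1)} ⊕ O(−1)^{⊕(m−a−1)}`.  Via the Proj dictionary, the
pushforward `m_* O(a)` is the graded module `d ↦ H⁰(P¹, O(md+a))` over the
homogeneous coordinate ring of the target (acting through `frobP1 m`), and the
statement says it is isomorphic, as a graded module, to `(a+1)` copies of the
module of `O` and `(m−a−1)` copies of that of `O(−1)`: there are linear
isomorphisms in each degree, compatible with multiplication by homogeneous
elements. -/
theorem stmt_15 (m : ℕ) (hm : 0 < m) (a : ℕ) (ha : a < m) :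
    ∃ e : (d : ℤ) → P1deg ((m : ℤ) * d + (a : ℤ)) ≃ₗ[ℚ]
        (Fin (a + 1) → P1deg d) × (Fin (m - a - 1) → P1deg (d - 1)),
      ∀ (d : ℤ) (c : ℕ) (f : MvPolynomial (Fin 2) ℚ),
        f ∈ MvPolynomial.homogeneousSubmodule (Fin 2) ℚ c →
        ∀ (v : P1deg ((m : ℤ) * d + (a : ℤ)))
          (hfv : frobP1 m f * (v : MvPolynomial (Fin 2) ℚ) ∈
            P1deg ((m : ℤ) * (d + (c : ℤ)) + (a : ℤ)))
          (h1 : ∀ i : Fin (a + 1),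
            f * ((e d v).1 i : MvPolynomial (Fin 2) ℚ) ∈ P1deg (d + (c : ℤ)))
          (h2 : ∀ j : Fin (m - a - 1),
            f * ((e d v).2 j : MvPolynomial (Fin 2) ℚ) ∈ P1deg (d + (c : ℤ) - 1)),
          e (d + (c : ℤ)) ⟨frobP1 m f * (v : MvPolynomial (Fin 2) ℚ), hfv⟩ =
            (fun i => ⟨f * ((e d v).1 i : MvPolynomial (Fin 2) ℚ), h1 i⟩,
             fun j => ⟨f * ((e d v).2 j : MvPolynomial (Fin 2) ℚ), h2 j⟩) :=
  stmt_15_general m a ha
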